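/- (Data-processing inequality for the trace distance under completely positive trace-nonincreasing maps, Lemma 2, finite-dimensional form.) Let n be a finite type and ι a finite index set. Let ρ, σ be Hermitian n×n complex matrices, and let K : ι → Matrix n n ℂ be a family of Kraus operators such that 1 − ∑_{i∈ι} Kᵢᴴ Kᵢ is positive semidefinite. Then the trace norm contracts under the induced map: ‖ ∑_{i∈ι} Kᵢ ρ Kᵢᴴ − ∑_{i∈ι} Kᵢ σ Kᵢᴴ ‖₁ ≤ ‖ ρ − σ ‖₁. -/

import Mathlib

open Matrix
open scoped ComplexOrder

variable {n : Type*} [Fintype n] [DecidableEq n]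

/-- The positive semidefinite square root of a positive semidefinite matrix, as defined in
the older Mathlib (removed since). -/
noncomputable def Matrix.PosSemidef.sqrt {A : Matrix n n ℂ} (hA : A.PosSemidef) : Matrix n n ℂ :=
  hA.1.eigenvectorUnitary.1 * diagonal ((↑) ∘ (√·) ∘ hA.1.eigenvalues) *
  (star hA.1.eigenvectorUnitary : Matrix n n ℂ)

/-- The trace norm of a complex matrix: `‖A‖₁ = Tr[√(Aᴴ A)]`, where `√` is the positive
semidefinite square root of the positive semidefinite matrix `Aᴴ A`. -/
noncomputable def traceNorm (A : Matrix n n ℂ) : ℝ :=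
  ((Matrix.posSemidef_conjTranspose_mul_self A : (Aᴴ * A).PosSemidef).sqrt.trace).re

/-!
Write `ρ - σ = A⁺ - A⁻` with `A⁺, A⁻ ⪰ 0` and `tr |ρ - σ| = tr A⁺ + tr A⁻`. The map
`Φ X = ∑ᵢ Kᵢ X Kᵢᴴ` is positive, so `Φ ρ - Φ σ = Φ A⁺ - Φ A⁻` is a difference of positive
matrices. For positive `X, Y` with `S` the sign of `X - Y`, one has `-1 ⪯ S ⪯ 1` and
`tr |X - Y| = tr (S X) - tr (S Y) ≤ tr X + tr Y`. Finally `tr Φ X = tr ((∑ᵢ Kᵢᴴ Kᵢ) X) ≤ tr X`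
for `X ⪰ 0`, which is where trace non-increase enters.
-/

open scoped MatrixOrder

namespace Matrix

variable {𝕜 : Type*} [RCLike 𝕜]

lemma PosSemidef.sqrt_eq_cfcSqrt {A : Matrix n n ℂ} (hA : A.PosSemidef) :
    hA.sqrt = CFC.sqrt A := by
  rw [CFC.sqrt_eq_real_sqrt A hA.nonneg, cfcₙ_eq_cfc, hA.1.cfc_eq]
  rfl

lemma trace_mul_nonneg {A B : Matrix n n 𝕜} (hA : 0 ≤ A) (hB : 0 ≤ B) :
    0 ≤ (A * B).trace := by
  have hsqrt : star (CFC.sqrt A) = CFC.sqrt A := (CFC.sqrt_nonneg A).isSelfAdjoint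
  rw [← CFC.sqrt_mul_sqrt_self A hA, mul_assoc, trace_mul_comm, mul_assoc, ← mul_assoc]
  nth_rw 1 [← hsqrt]
  exact (star_left_conjugate_nonneg hB _).posSemidef.trace_nonneg

lemma trace_mul_le_trace_mul_of_nonneg_right {S T X : Matrix n n 𝕜} (hST : S ≤ T)
    (hX : 0 ≤ X) : (S * X).trace ≤ (T * X).trace := by
  simpa [sub_mul, trace_sub, sub_nonneg] using trace_mul_nonneg (sub_nonneg.2 hST) hX

lemma cfc_sign_mul_self {B : Matrix n n 𝕜} (hB : IsSelfAdjoint B) :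
    cfc (fun x : ℝ => (SignType.sign x : ℝ)) B * B = CFC.abs B := by
  rw [CFC.abs_eq_cfc_norm B hB]
  nth_rw 2 [← cfc_id' ℝ B]
  rw [← cfc_mul _ _ _ (B.finite_real_spectrum.continuousOn _)]
  exact cfc_congr fun x _ => by simp [sign_mul_self, Real.norm_eq_abs]

lemma trace_abs_sub_le {X Y : Matrix n n 𝕜} (hX : 0 ≤ X) (hY : 0 ≤ Y) :
    (CFC.abs (X - Y)).trace ≤ X.trace + Y.trace := by
  set S := cfc (fun x : ℝ => (SignType.sign x : ℝ)) (X - Y)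
  have hS_le : S ≤ 1 := cfc_le_one _ _ fun x _ => by cases SignType.sign x <;> norm_num
  have hneg_S_le : -S ≤ 1 := by
    rw [← cfc_neg]
    exact cfc_le_one _ _ fun x _ => by cases SignType.sign x <;> norm_num
  calc (CFC.abs (X - Y)).trace = (S * X).trace + (-S * Y).trace := by
        rw [← cfc_sign_mul_self (hX.isSelfAdjoint.sub hY.isSelfAdjoint), mul_sub, trace_sub,
          neg_mul, trace_neg, sub_eq_add_neg]
    _ ≤ (1 * X).trace + (1 * Y).trace := by
        gcongr ?_ + ?_
        · exact trace_mul_le_trace_mul_of_nonneg_right hS_le hX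
        · exact trace_mul_le_trace_mul_of_nonneg_right hneg_S_le hY
    _ = X.trace + Y.trace := by simp only [one_mul]

section Kraus

variable {ι l m : Type*} [Fintype ι] [Fintype l]

def krausMap (K : ι → Matrix m l 𝕜) (X : Matrix l l 𝕜) : Matrix m m 𝕜 :=
  ∑ i, K i * X * (K i)ᴴ

variable (K : ι → Matrix m l 𝕜)

lemma krausMap_sub (X Y : Matrix l l 𝕜) : krausMap K (X - Y) = krausMap K X - krausMap K Y := by
  simp only [krausMap, Matrix.mul_sub, Matrix.sub_mul, Finset.sum_sub_distrib]

variable [Fintype m]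

lemma krausMap_nonneg {X : Matrix l l 𝕜} (hX : 0 ≤ X) : 0 ≤ krausMap K X :=
  Finset.sum_nonneg fun i _ => (hX.posSemidef.mul_mul_conjTranspose_same (K i)).nonneg

lemma trace_krausMap (X : Matrix l l 𝕜) :
    (krausMap K X).trace = ((∑ i, (K i)ᴴ * K i) * X).trace := by
  simp only [krausMap, trace_sum, Finset.sum_mul]
  exact Finset.sum_congr rfl fun i _ => trace_mul_cycle _ _ _

variable {K} [DecidableEq l]

lemma trace_krausMap_le (hK : ∑ i, (K i)ᴴ * K i ≤ 1) {X : Matrix l l 𝕜} (hX : 0 ≤ X) :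
    (krausMap K X).trace ≤ X.trace := by
  simpa [trace_krausMap] using trace_mul_le_trace_mul_of_nonneg_right hK hX

lemma trace_abs_krausMap_le [DecidableEq m] (hK : ∑ i, (K i)ᴴ * K i ≤ 1) {A : Matrix l l 𝕜}
    (hA : IsSelfAdjoint A) : (CFC.abs (krausMap K A)).trace ≤ (CFC.abs A).trace :=
  calc (CFC.abs (krausMap K A)).trace
      = (CFC.abs (krausMap K A⁺ - krausMap K A⁻)).trace := by
        rw [← krausMap_sub, CFC.posPart_sub_negPart A hA]
    _ ≤ (krausMap K A⁺).trace + (krausMap K A⁻).trace :=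
        trace_abs_sub_le (krausMap_nonneg K (CFC.posPart_nonneg A))
          (krausMap_nonneg K (CFC.negPart_nonneg A))
    _ ≤ (A⁺).trace + (A⁻).trace :=
        add_le_add (trace_krausMap_le hK (CFC.posPart_nonneg A))
          (trace_krausMap_le hK (CFC.negPart_nonneg A))
    _ = (CFC.abs A).trace := by rw [← trace_add, CFC.posPart_add_negPart A hA]

end Kraus

end Matrix

lemma traceNorm_eq_re_trace_abs (A : Matrix n n ℂ) : traceNorm A = (CFC.abs A).trace.re := by
  rw [traceNorm, PosSemidef.sqrt_eq_cfcSqrt, CFC.abs, star_eq_conjTranspose]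

/-- Data-processing inequality for the trace distance under completely positive
trace-nonincreasing maps (Lemma 2, finite-dimensional form): if the Kraus family `K`
satisfies `1 − ∑ᵢ Kᵢᴴ Kᵢ ⪰ 0`, then
`‖∑ᵢ Kᵢ ρ Kᵢᴴ − ∑ᵢ Kᵢ σ Kᵢᴴ‖₁ ≤ ‖ρ − σ‖₁` for Hermitian `ρ, σ`. -/
theorem traceNorm_cptni_apply_sub_le {ι : Type*} [Fintype ι]
    (ρ σ : Matrix n n ℂ) (hρ : ρ.IsHermitian) (hσ : σ.IsHermitian)
    (K : ι → Matrix n n ℂ)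
    (hK : (1 - ∑ i, (K i)ᴴ * K i).PosSemidef) :
    traceNorm ((∑ i, K i * ρ * (K i)ᴴ) - ∑ i, K i * σ * (K i)ᴴ) ≤ traceNorm (ρ - σ) := by
  change traceNorm (krausMap K ρ - krausMap K σ) ≤ _
  rw [← krausMap_sub, traceNorm_eq_re_trace_abs, traceNorm_eq_re_trace_abs]
  exact Complex.re_le_re (trace_abs_krausMap_le (le_iff.2 hK) (hρ.sub hσ).isSelfAdjoint)
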